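/- arXiv:2107.03245 — 4 statements merged into one kernel-verified Lean document; each statement's English description precedes it below -/
import Mathlib

section
/- Let s1 ≥ s2 > 0 and u ∈ (0, s1 + s2] with u ≥ |s1 - s2| (if positive), and set ρ(u) = (s2² - s1² - u²)/(2·s1·u). Then ρ(u) ≤ -√(s1² - s2²)/s1, with equality when u = √(s1² - s2²). -/
theorem stmt_2 (s1 s2 u : ℝ) (hs2 : 0 < s2) (hs12 : s2 ≤ s1)
    (hu0 : 0 < u) (hub : u ≤ s1 + s2) (hlb : |s1 - s2| ≤ u) :
    (s2 ^ 2 - s1 ^ 2 - u ^ 2) / (2 * s1 * u) ≤ -Real.sqrt (s1 ^ 2 - s2 ^ 2) / s1 ∧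
    (u = Real.sqrt (s1 ^ 2 - s2 ^ 2) →
      (s2 ^ 2 - s1 ^ 2 - u ^ 2) / (2 * s1 * u) = -Real.sqrt (s1 ^ 2 - s2 ^ 2) / s1) := by
  have hs1 : 0 < s1 := lt_of_lt_of_le hs2 hs12
  have hd : 0 ≤ s1 ^ 2 - s2 ^ 2 := by nlinarith
  set r := Real.sqrt (s1 ^ 2 - s2 ^ 2) with hr
  have hr2 : r ^ 2 = s1 ^ 2 - s2 ^ 2 := Real.sq_sqrt hd
  have hrnn : 0 ≤ r := Real.sqrt_nonneg _
  constructor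
  · rw [div_le_div_iff₀ (by positivity) hs1]
    nlinarith [sq_nonneg (u - r), mul_pos hs1 hu0]
  · intro h
    have hrpos : 0 < r := h ▸ hu0
    rw [h]
    rw [div_eq_div_iff (by positivity) (ne_of_gt hs1)]
    nlinarith
end

section
/- Suppose the first coordinate W_1 of the covariate vector takes only two values a ≠ b. Then for any finite set of support points w_1,…,w_m ∈ ℝ^{p-1} of W (each with first coordinate in {a,b}), the m × p(p+1)/2 matrix S_m with rows v((1, w_i^T)^T) has rank at most p(p+1)/2 − 1, where v is the squares-and-doubled-cross-products transformation on ℝ^p. -/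
/-!
Pair the row `v(x)` with coefficients `c` on the upper-triangular index pairs: this evaluates the
quadratic form `xᵀ C x`. The form `(x₁ - a x₀)(x₁ - b x₀)` vanishes at every `x = (1, w)` with
`w₀ ∈ {a, b}`, so its nonzero coefficient vector lies in the kernel of the design matrix, and
rank–nullity costs at least one dimension.
-/

open Matrix

theorem Matrix.rank_le_card_sub_one_of_mulVec_eq_zero {m n K : Type*} [Fintype m] [Fintype n]
    [Field K] {M : Matrix m n K} {c : n → K} (hc : c ≠ 0) (h : M *ᵥ c = 0) :
    M.rank ≤ Fintype.card n - 1 := by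
  have hker : 0 < Module.finrank K (LinearMap.ker M.mulVecLin) :=
    Module.finrank_pos_iff_exists_ne_zero.mpr ⟨⟨c, h⟩, by simpa [Subtype.ext_iff] using hc⟩
  have hsum := LinearMap.finrank_range_add_finrank_ker M.mulVecLin
  rw [Module.finrank_fintype_fun_eq_card] at hsum
  change M.rank + _ = _ at hsum
  omega

section QuadraticFeatures

variable {ι K : Type*} [LinearOrder ι] [Field K]

/-- The paper's `v(x)`, indexed by the pairs `i ≤ j`. -/
def quadraticFeatures (x : ι → K) (q : {q : ι × ι // q.1 ≤ q.2}) : K :=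
  if q.1.1 = q.1.2 then x q.1.1 ^ 2 else 2 * x q.1.1 * x q.1.2

def twoPointAnnihilator {i j : ι} (hij : i ≤ j) (a b : K) : {q : ι × ι // q.1 ≤ q.2} → K :=
  Pi.single ⟨(i, i), le_rfl⟩ (a * b) + Pi.single ⟨(j, j), le_rfl⟩ 1 -
    Pi.single ⟨(i, j), hij⟩ ((a + b) / 2)

theorem twoPointAnnihilator_ne_zero {i j : ι} (hij : i < j) (a b : K) :
    twoPointAnnihilator hij.le a b ≠ 0 := by
  intro h
  have hjj := congrFun h ⟨(j, j), le_rfl⟩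
  simp [twoPointAnnihilator, hij.ne'] at hjj

theorem quadraticFeatures_dotProduct_twoPointAnnihilator [Fintype ι] [NeZero (2 : K)] (x : ι → K)
    {i j : ι} (hij : i < j) (a b : K) :
    quadraticFeatures x ⬝ᵥ twoPointAnnihilator hij.le a b = (x j - a * x i) * (x j - b * x i) := by
  simp only [twoPointAnnihilator, dotProduct_add, dotProduct_sub, dotProduct_single,
    quadraticFeatures, if_true, if_neg hij.ne]
  field_simp
  ring

end QuadraticFeatures

/-- The paper's `p` is `p + 2` here: `w i ∈ ℝ^(p+1)` and `x = (1, w i) ∈ ℝ^(p+2)`. -/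
theorem stmt_10_general (p m : ℕ) (w : Fin m → (Fin (p + 1) → ℝ)) (a b : ℝ)
    (hw : ∀ i, w i 0 = a ∨ w i 0 = b) :
    (Matrix.of fun (i : Fin m) (q : {q : Fin (p + 2) × Fin (p + 2) // q.1 ≤ q.2}) =>
        if q.1.1 = q.1.2 then (Fin.cons (1 : ℝ) (w i) : Fin (p + 2) → ℝ) q.1.1 ^ 2
        else 2 * (Fin.cons (1 : ℝ) (w i) : Fin (p + 2) → ℝ) q.1.1 *
          (Fin.cons (1 : ℝ) (w i) : Fin (p + 2) → ℝ) q.1.2).rank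
      ≤ Fintype.card {q : Fin (p + 2) × Fin (p + 2) // q.1 ≤ q.2} - 1 := by
  have h01 : (0 : Fin (p + 2)) < 1 := Fin.zero_lt_one
  refine Matrix.rank_le_card_sub_one_of_mulVec_eq_zero (twoPointAnnihilator_ne_zero h01 a b) ?_
  funext i
  change quadraticFeatures (Fin.cons 1 (w i)) ⬝ᵥ _ = 0
  rw [quadraticFeatures_dotProduct_twoPointAnnihilator _ h01]
  rcases hw i with h | h <;> simp [h]

/-- If the first covariate takes only two values, the design matrix of the
second-moment regression cannot have full column rank. Here covariates live in
ℝ^(p+1) (so the full vector x = (1, wᵀ) lives in ℝ^(p+2)). -/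
theorem stmt_10 (p m : ℕ) (w : Fin m → (Fin (p + 1) → ℝ)) (a b : ℝ) (hab : a ≠ b)
    (hw : ∀ i, w i 0 = a ∨ w i 0 = b) :
    (Matrix.of fun (i : Fin m) (q : {q : Fin (p + 2) × Fin (p + 2) // q.1 ≤ q.2}) =>
        if q.1.1 = q.1.2 then (Fin.cons (1 : ℝ) (w i) : Fin (p + 2) → ℝ) q.1.1 ^ 2
        else 2 * (Fin.cons (1 : ℝ) (w i) : Fin (p + 2) → ℝ) q.1.1 *
          (Fin.cons (1 : ℝ) (w i) : Fin (p + 2) → ℝ) q.1.2).rank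
      ≤ Fintype.card {q : Fin (p + 2) × Fin (p + 2) // q.1 ≤ q.2} - 1 :=
  stmt_10_general p m w a b hw
end

section
/- Let s ∈ ℝ and let Σ₀ be a positive semidefinite (p-1)×(p-1) matrix with first basis vector e₁. Suppose for all z ∈ ℝ and v = (v_1,…,v_{p-1}) ∈ ℝ^{p-1}: s·(z² − z·v_1) + v^T Σ₀ v ≥ 0. If Σ₀ is degenerate with a kernel vector u satisfying u_1 ≠ 0, then s = 0. -/
theorem stmt_11_general (n : ℕ) (s : ℝ) (S : Matrix (Fin (n + 1)) (Fin (n + 1)) ℝ)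
    (h : ∀ (z : ℝ) (v : Fin (n + 1) → ℝ),
      0 ≤ s * (z ^ 2 - z * v 0) + dotProduct v (S.mulVec v))
    (u : Fin (n + 1) → ℝ) (hu : S.mulVec u = 0) (hu0 : u 0 ≠ 0) :
    s = 0 := by
  have hs_nonneg : 0 ≤ s := by simpa using h 1 0
  -- On the kernel vector `v = (2 / u 0) • u` the form vanishes and `v 0 = 2`, so `z = 1` leaves `-s`.
  have hs_nonpos : s ≤ 0 := by
    have hv : S.mulVec ((2 / u 0) • u) = 0 := by rw [Matrix.mulVec_smul, hu, smul_zero]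
    have key := h 1 ((2 / u 0) • u)
    rw [hv, dotProduct_zero, Pi.smul_apply, smul_eq_mul, div_mul_cancel₀ _ hu0] at key
    linarith
  linarith

theorem stmt_11 (n : ℕ) (s : ℝ) (S : Matrix (Fin (n + 1)) (Fin (n + 1)) ℝ)
    (hS : S.PosSemidef)
    (h : ∀ (z : ℝ) (v : Fin (n + 1) → ℝ),
      0 ≤ s * (z ^ 2 - z * v 0) + dotProduct v (S.mulVec v))
    (u : Fin (n + 1) → ℝ) (hu : S.mulVec u = 0) (hu0 : u 0 ≠ 0) :
    s = 0 :=
  stmt_11_general n s S h u hu hu0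
end

section
/- Let m = p(p+1)/2 and suppose all support points w of a random vector W ∈ ℝ^{p-1} satisfy that v((1,w^T)^T) lies in a fixed (m−1)-dimensional linear subspace V of ℝ^m. Let z be a unit vector orthogonal to V and Z the symmetric p×p matrix with vec(Z) = z. Then for every positive definite p×p matrix Σ* there exists ε > 0 such that Σ₁ = Σ* + εZ is positive definite, and (1,w^T) Σ₁ (1,w^T)^T = (1,w^T) Σ* (1,w^T)^T for all w in the support of W. -/
/-!
For symmetric `Z` the quadratic form `xᵀ Z x` is the pairing of the half-vectorization `vech Z`
with the vector `v(x)` of quadratic monomials. At `x = (1, w)` with `w` in the support, `v(x)`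
lies in `V` and `vech Z ⟂ V`, so adding any multiple of `Z` to `Σ*` leaves every conditional
variance unchanged. Positive definiteness survives a small enough multiple because on the compact
unit sphere the quadratic form of `Σ*` is bounded below by a positive constant and that of `Z`
is bounded.
-/

open Matrix

open Finset in
theorem Finset.sum_sum_eq_sum_le {ι M : Type*} [Fintype ι] [LinearOrder ι] [AddCommMonoid M]
    (f : ι → ι → M) :
    ∑ i, ∑ j, f i j = ∑ q : {q : ι × ι // q.1 ≤ q.2},
      if q.1.1 = q.1.2 then f q.1.1 q.1.2 else f q.1.1 q.1.2 + f q.1.2 q.1.1 := by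
  have hswap :
      ∑ p : ι × ι with ¬p.1 ≤ p.2, f p.1 p.2 = ∑ p : ι × ι with p.1 < p.2, f p.2 p.1 :=
    sum_equiv (Equiv.prodComm ι ι) (by simp) (by simp)
  have hlt : ∑ p : ι × ι with p.1 < p.2, f p.2 p.1 =
      ∑ p : ι × ι with p.1 ≤ p.2, if p.1 = p.2 then 0 else f p.2 p.1 := by
    rw [sum_ite, sum_const_zero, zero_add, filter_filter]
    simp_rw [lt_iff_le_and_ne]
  rw [← Fintype.sum_prod_type' f,
    ← sum_filter_add_sum_filter_not univ (fun p : ι × ι => p.1 ≤ p.2), hswap, hlt,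
    ← sum_add_distrib, sum_subtype (p := fun p : ι × ι => p.1 ≤ p.2) _ (by simp)]
  refine sum_congr rfl fun q _ => ?_
  split_ifs <;> simp [*]

section HalfVectorization

variable {ι R : Type*} [Fintype ι] [LinearOrder ι] [CommRing R]

def Matrix.vech (A : Matrix ι ι R) : {q : ι × ι // q.1 ≤ q.2} → R :=
  fun q => A q.1.1 q.1.2

/-- The map `v` of the paper. -/
def quadMonomials (x : ι → R) : {q : ι × ι // q.1 ≤ q.2} → R :=
  fun q => if q.1.1 = q.1.2 then x q.1.1 ^ 2 else 2 * x q.1.1 * x q.1.2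

theorem Matrix.IsSymm.dotProduct_mulVec_self {A : Matrix ι ι R} (hA : A.IsSymm) (x : ι → R) :
    x ⬝ᵥ A *ᵥ x = A.vech ⬝ᵥ quadMonomials x := by
  have hsum : x ⬝ᵥ A *ᵥ x = ∑ i, ∑ j, x i * A i j * x j := by
    simp only [dotProduct, mulVec, Finset.mul_sum, mul_assoc]
  rw [hsum, Finset.sum_sum_eq_sum_le]
  refine Finset.sum_congr rfl fun q _ => ?_
  simp only [vech, quadMonomials]
  split_ifs with h
  · rw [h]; ring
  · rw [hA.apply q.1.1 q.1.2]; ring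

end HalfVectorization

theorem IsCompact.exists_pos_forall_pos_add_mul {X : Type*} [TopologicalSpace X] {K : Set X}
    (hK : IsCompact K) {f g : X → ℝ} (hf : ContinuousOn f K) (hg : ContinuousOn g K)
    (hpos : ∀ x ∈ K, 0 < f x) : ∃ ε > 0, ∀ x ∈ K, 0 < f x + ε * g x := by
  obtain ⟨C, hC⟩ := hK.exists_bound_of_continuousOn (hg.div hf fun x hx => (hpos x hx).ne')
  refine ⟨(|C| + 1)⁻¹, by positivity, fun x hx => ?_⟩
  have hgf : |g x| ≤ |C| * f x := by
    have := (hC x hx).trans (le_abs_self C)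
    rwa [Real.norm_eq_abs, Pi.div_apply, abs_div, abs_of_pos (hpos x hx),
      div_le_iff₀ (hpos x hx)] at this
  have hε : (|C| + 1)⁻¹ * |C| < 1 := by
    rw [inv_mul_lt_iff₀ (by positivity)]; linarith
  nlinarith [neg_abs_le (g x), hpos x hx, inv_pos.2 (show 0 < |C| + 1 by positivity)]

theorem Matrix.posDef_of_forall_mem_sphere {ι : Type*} [Fintype ι] {M : Matrix ι ι ℝ}
    (hM : M.IsHermitian) (h : ∀ x ∈ Metric.sphere (0 : ι → ℝ) 1, 0 < x ⬝ᵥ M *ᵥ x) :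
    M.PosDef := by
  refine .of_dotProduct_mulVec_pos hM fun x hx => ?_
  have hr : 0 < ‖x‖ := norm_pos_iff.2 hx
  have hu : ‖x‖⁻¹ • x ∈ Metric.sphere (0 : ι → ℝ) 1 := by
    simp [norm_smul, hr.ne']
  have := h _ hu
  rw [smul_dotProduct, mulVec_smul, dotProduct_smul, smul_eq_mul, smul_eq_mul] at this
  rw [star_trivial]
  exact pos_of_mul_pos_right (pos_of_mul_pos_right this (by positivity)) (by positivity)

theorem Matrix.PosDef.exists_pos_add_smul_posDef {ι : Type*} [Fintype ι] {A B : Matrix ι ι ℝ}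
    (hA : A.PosDef) (hB : B.IsHermitian) : ∃ ε > (0 : ℝ), (A + ε • B).PosDef := by
  have hquad (M : Matrix ι ι ℝ) : Continuous fun x : ι → ℝ => x ⬝ᵥ M *ᵥ x := by
    simp only [dotProduct, mulVec]; fun_prop
  obtain ⟨ε, hε, hpos⟩ := (isCompact_sphere (0 : ι → ℝ) 1).exists_pos_forall_pos_add_mul
    (hquad A).continuousOn (hquad B).continuousOn fun x hx =>
      by simpa using hA.dotProduct_mulVec_pos (ne_zero_of_mem_unit_sphere ⟨x, hx⟩)
  have hherm : (A + ε • B).IsHermitian := hA.isHermitian.add (hB.smul (IsSelfAdjoint.all ε))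
  refine ⟨ε, hε, posDef_of_forall_mem_sphere hherm fun x hx => ?_⟩
  simpa [add_mulVec, smul_mulVec] using hpos x hx

theorem stmt_13_general (n : ℕ) (Wsupp : Set (Fin n → ℝ))
    (V : Submodule ℝ ({q : Fin (n + 1) × Fin (n + 1) // q.1 ≤ q.2} → ℝ))
    (hsupp : ∀ w ∈ Wsupp,
      (fun q : {q : Fin (n + 1) × Fin (n + 1) // q.1 ≤ q.2} =>
        if q.1.1 = q.1.2 then (Fin.cons (1 : ℝ) w : Fin (n + 1) → ℝ) q.1.1 ^ 2
        else 2 * (Fin.cons (1 : ℝ) w : Fin (n + 1) → ℝ) q.1.1 *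
          (Fin.cons (1 : ℝ) w : Fin (n + 1) → ℝ) q.1.2) ∈ V)
    (Z : Matrix (Fin (n + 1)) (Fin (n + 1)) ℝ) (hZ : Z.IsSymm)
    (horth : ∀ y ∈ V,
      ∑ q : {q : Fin (n + 1) × Fin (n + 1) // q.1 ≤ q.2},
        Z q.1.1 q.1.2 * y q = 0)
    (Sstar : Matrix (Fin (n + 1)) (Fin (n + 1)) ℝ) (hpos : Sstar.PosDef) :
    ∃ ε > (0 : ℝ), (Sstar + ε • Z).PosDef ∧
      ∀ w ∈ Wsupp,
        dotProduct (Fin.cons (1 : ℝ) w)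
            ((Sstar + ε • Z).mulVec (Fin.cons (1 : ℝ) w)) =
          dotProduct (Fin.cons (1 : ℝ) w)
            (Sstar.mulVec (Fin.cons (1 : ℝ) w)) := by
  obtain ⟨ε, hε, hpd⟩ := hpos.exists_pos_add_smul_posDef (isHermitian_iff_isSymm.2 hZ)
  refine ⟨ε, hε, hpd, fun w hw => ?_⟩
  have hZw : Fin.cons 1 w ⬝ᵥ Z *ᵥ Fin.cons 1 w = 0 :=
    (hZ.dotProduct_mulVec_self _).trans (horth _ (hsupp w hw))
  rw [add_mulVec, dotProduct_add, smul_mulVec, dotProduct_smul, hZw, smul_zero, add_zero]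

/-- Non-identifiability construction: if all transformed support points lie in a
hyperplane V and Z is a symmetric matrix whose half-vectorization is a unit
vector orthogonal to V, then any positive definite Σ* can be perturbed to a
different positive definite matrix with the same conditional variances. -/
theorem stmt_13 (n : ℕ) (Wsupp : Set (Fin n → ℝ))
    (V : Submodule ℝ ({q : Fin (n + 1) × Fin (n + 1) // q.1 ≤ q.2} → ℝ))
    (hVdim : Module.finrank ℝ V =
      Fintype.card {q : Fin (n + 1) × Fin (n + 1) // q.1 ≤ q.2} - 1)
    (hsupp : ∀ w ∈ Wsupp,
      (fun q : {q : Fin (n + 1) × Fin (n + 1) // q.1 ≤ q.2} =>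
        if q.1.1 = q.1.2 then (Fin.cons (1 : ℝ) w : Fin (n + 1) → ℝ) q.1.1 ^ 2
        else 2 * (Fin.cons (1 : ℝ) w : Fin (n + 1) → ℝ) q.1.1 *
          (Fin.cons (1 : ℝ) w : Fin (n + 1) → ℝ) q.1.2) ∈ V)
    (Z : Matrix (Fin (n + 1)) (Fin (n + 1)) ℝ) (hZ : Z.IsSymm)
    (hznorm : ∑ q : {q : Fin (n + 1) × Fin (n + 1) // q.1 ≤ q.2},
      (Z q.1.1 q.1.2) ^ 2 = 1)
    (horth : ∀ y ∈ V,
      ∑ q : {q : Fin (n + 1) × Fin (n + 1) // q.1 ≤ q.2},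
        Z q.1.1 q.1.2 * y q = 0)
    (Sstar : Matrix (Fin (n + 1)) (Fin (n + 1)) ℝ) (hpos : Sstar.PosDef) :
    ∃ ε > (0 : ℝ), (Sstar + ε • Z).PosDef ∧
      ∀ w ∈ Wsupp,
        dotProduct (Fin.cons (1 : ℝ) w)
            ((Sstar + ε • Z).mulVec (Fin.cons (1 : ℝ) w)) =
          dotProduct (Fin.cons (1 : ℝ) w)
            (Sstar.mulVec (Fin.cons (1 : ℝ) w)) :=
  stmt_13_general n Wsupp V hsupp Z hZ horth Sstar hpos
end
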